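/- For every n ≥ 0, the Apéry number B(n) = Σ_{k=0}^n binom(n,k)^2·binom(n+k,k) equals the constant term of the Laurent polynomial ((x+1)(x+y)(x+y+1)/(xy))^n. -/

import Mathlib

/-!
Since `x` and `y` are units, the constant term of `(P / (xy))^n` with
`P = (x+1)(x+y)(x+y+1)` is the coefficient of `xⁿyⁿ` in the polynomial `Pⁿ`. Writing
`P = (x+1)·r(r+1)` with `r = x+y`, the binomial theorem gives
`Pⁿ = (x+1)ⁿ Σₖ C(n,k) rⁿ⁺ᵏ`; the `yⁿ`-coefficient of `rⁿ⁺ᵏ` is `C(n+k,k) xᵏ`, and the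
`xⁿ`-coefficient of `(x+1)ⁿxᵏ` is `C(n,k)`.
-/

/-- Laurent polynomials with integer coefficients in `d` variables. -/
abbrev LP (d : ℕ) := AddMonoidAlgebra ℤ (Fin d → ℤ)

/-- The monomial `x^k` in `LP d`. -/
noncomputable def mono {d : ℕ} (k : Fin d → ℤ) : LP d := AddMonoidAlgebra.single k 1

open Polynomial Finset

theorem mul_add_one_pow {R : Type*} [CommSemiring R] (r : R) (n : ℕ) :
    (r * (r + 1)) ^ n = ∑ k ∈ range (n + 1), (n.choose k : R) * r ^ (n + k) := by
  rw [mul_pow, add_pow, mul_sum]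
  refine sum_congr rfl fun k _ => ?_
  rw [one_pow, mul_one, ← mul_assoc, ← pow_add, mul_comm]

theorem coeff_X_add_one_pow_mul_X_pow {R : Type*} [Semiring R] {n k : ℕ} (hk : k ≤ n) :
    ((X + 1 : R[X]) ^ n * X ^ k).coeff n = (n.choose k : R) := by
  rw [coeff_mul_X_pow', if_pos hk, coeff_X_add_one_pow, Nat.choose_symm hk]

theorem coeff_coeff_pow_eq_apery {R : Type*} [CommSemiring R] (n : ℕ) :
    ((((C X + 1) * (C X + X) * (C X + X + 1) : R[X][X]) ^ n).coeff n).coeff n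
      = ∑ k ∈ range (n + 1), (n.choose k : R) ^ 2 * (n + k).choose k := by
  have hfactor : ((C X + 1) * (C X + X) * (C X + X + 1) : R[X][X])
      = C (X + 1) * ((X + C X) * (X + C X + 1)) := by
    rw [map_add, map_one]; ring
  rw [hfactor, mul_pow, ← C_pow, mul_add_one_pow, mul_sum, finsetSum_coeff, finsetSum_coeff]
  refine sum_congr rfl fun k hk => ?_
  have hk : k ≤ n := Nat.lt_succ_iff.mp (mem_range.mp hk)
  have hcoeff_y : (C ((X + 1 : R[X]) ^ n) * ((n.choose k : R[X][X]) * (X + C X) ^ (n + k))).coeff n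
      = (n.choose k * (n + k).choose k : R[X]) * ((X + 1) ^ n * X ^ k) := by
    rw [coeff_C_mul, ← C_eq_natCast, coeff_C_mul, coeff_X_add_C_pow, Nat.add_sub_cancel_left,
      Nat.choose_symm_add]
    ring
  rw [hcoeff_y, ← C_eq_natCast, ← C_eq_natCast, ← C_mul, coeff_C_mul,
    coeff_X_add_one_pow_mul_X_pow hk]
  ring

theorem mono_pow {d : ℕ} (k : Fin d → ℤ) (m : ℕ) : mono k ^ m = mono (m • k) := by
  simp [mono]

theorem coeff_mul_mono {d : ℕ} (f : LP d) (k v : Fin d → ℤ) :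
    (f * mono k).coeff v = f.coeff (v - k) := by
  simp [mono, sub_eq_add_neg]

/-- The inner variable of `ℤ[X][X]` becomes `x`, the outer one `y`. -/
noncomputable def toLP : ℤ[X][X] →+* LP 2 :=
  eval₂RingHom (eval₂RingHom (Int.castRingHom (LP 2)) (mono ![1, 0])) (mono ![0, 1])

theorem toLP_C_X : toLP (C X) = mono ![1, 0] := by
  simp [toLP]

theorem toLP_X : toLP X = mono ![0, 1] := by
  simp [toLP]

theorem toLP_monomial_monomial (m k : ℕ) (c : ℤ) :
    toLP (monomial m (monomial k c)) = AddMonoidAlgebra.single ![(k : ℤ), m] c := by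
  simp [toLP, eval₂_monomial, mono, AddMonoidAlgebra.intCast_def]

theorem coeff_toLP (p : ℤ[X][X]) (a b : ℕ) :
    (toLP p).coeff ![(a : ℤ), b] = (p.coeff b).coeff a := by
  induction p using Polynomial.induction_on' with
  | add p q hp hq =>
    simp only [map_add, coeff_add, AddMonoidAlgebra.coeff_add, Finsupp.add_apply, hp, hq]
  | monomial m q =>
    induction q using Polynomial.induction_on' with
    | add q r hq hr =>
      simp only [(monomial m).map_add, map_add, coeff_add, AddMonoidAlgebra.coeff_add,
        Finsupp.add_apply, hq, hr]
    | monomial k c =>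
      rw [toLP_monomial_monomial, AddMonoidAlgebra.coeff_single, Finsupp.single_apply,
        coeff_monomial]
      by_cases hm : m = b <;> by_cases hk : k = a <;> simp [hm, hk, coeff_monomial]

theorem apery2_eq_constantTerm (n : ℕ) :
    (((mono ![1, 0] + 1) * (mono ![1, 0] + mono ![0, 1]) * (mono ![1, 0] + mono ![0, 1] + 1)
        * mono ![-1, -1]) ^ n : LP 2).coeff (0 : Fin 2 → ℤ)
      = (∑ k ∈ Finset.range (n + 1), (n.choose k) ^ 2 * ((n + k).choose k) : ℤ) := by
  have hP : ((mono ![1, 0] + 1) * (mono ![1, 0] + mono ![0, 1])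
      * (mono ![1, 0] + mono ![0, 1] + 1) : LP 2)
      = toLP ((C X + 1) * (C X + X) * (C X + X + 1)) := by
    simp only [map_mul, map_add, map_one, toLP_C_X, toLP_X]
  have hexponent : (0 : Fin 2 → ℤ) - n • ![-1, -1] = ![(n : ℤ), n] := by
    ext i; fin_cases i <;> simp
  rw [hP, mul_pow, ← map_pow, mono_pow, coeff_mul_mono, hexponent, coeff_toLP,
    coeff_coeff_pow_eq_apery]
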